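/- Let X be a finite totally ordered set and M a regular QHS on X. Then the quadratic semigroup algebra R_M = K⟨X⟩/J_M, where J_M is the two-sided ideal of K⟨X⟩ generated by M, is finite dimensional as a K-vector space. -/

import Mathlib

/-!
Fix `m` such that no monomial of degree `m` is singular. Every word `u` of degree `m + 1` lies
in `J_M`, by well-founded induction on the right-to-left lexicographic order. Write `u = w c`.
Either `w ∈ I_M`, or `w` is congruent modulo `I_M` to the least word `w₀` of its class, which is
minimal and hence tame: `w₀ ≡ v` with `v_j = b = max X` and `v` agreeing with `w₀` after `j`.
Since `b` is maximal, the generator of `M` whose support contains `b x` (`x` the letter after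
position `j` in `v c`) is either `b x` itself, killing `v c`, or `b x - γ δ` with `δ < x`; in the
latter case rewriting yields a word smaller than `w₀ c ≤ u`. Hence `R_M` is spanned by the
finitely many words of degree at most `m`.
-/

noncomputable section

/-- The monomial in the free algebra `K⟨X⟩ = MonoidAlgebra K (FreeMonoid X)`
corresponding to a word `w`. -/
def mOfW (K : Type*) [Field K] {X : Type*} (w : FreeMonoid X) :
    MonoidAlgebra K (FreeMonoid X) :=
  MonoidAlgebra.single w 1

/-- The degree-`m` monomial `u_1 u_2 ⋯ u_m`. -/
def mOf (K : Type*) [Field K] {X : Type*} {m : ℕ} (u : Fin m → X) :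
    MonoidAlgebra K (FreeMonoid X) :=
  mOfW K (FreeMonoid.ofList (List.ofFn u))

/-- The degree-2 monomial `ab`. -/
def m2 (K : Type*) [Field K] {X : Type*} (a b : X) :
    MonoidAlgebra K (FreeMonoid X) :=
  mOfW K (FreeMonoid.of a * FreeMonoid.of b)

/-- The support of an element of `K⟨X⟩`: the set of words occurring with
nonzero coefficient. -/
def suppOf {K X : Type*} [Field K] (f : MonoidAlgebra K (FreeMonoid X)) :
    Finset (FreeMonoid X) :=
  Finsupp.support f.coeff

/-- The two-sided ideal generated by a set `s` in a `K`-algebra, viewed as the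
`K`-submodule spanned by all products `p * a * q` with `a ∈ s`. -/
def idealSpan (K : Type*) [Field K] {A : Type*} [Ring A] [Algebra K A]
    (s : Set A) : Submodule K A :=
  Submodule.span K {x | ∃ p q : A, ∃ a ∈ s, x = p * a * q}

/-- `M` is a Quasierhöhungssystem (QHS) on the totally ordered set `X`. -/
def IsQHS (K : Type*) [Field K] {X : Type*} [LinearOrder X]
    (M : Set (MonoidAlgebra K (FreeMonoid X))) : Prop :=
  M.PairwiseDisjoint (fun g => (suppOf g : Set (FreeMonoid X))) ∧
  (⋃ g ∈ M, (suppOf g : Set (FreeMonoid X))) =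
    {w | ∃ a b : X, b ≤ a ∧ w = FreeMonoid.of a * FreeMonoid.of b} ∧
  ∀ g ∈ M,
    (∃ a b : X, b ≤ a ∧ g = m2 K a b) ∨
    (∃ a b c d : X, d ≤ c ∧ c < b ∧ b ≤ a ∧ g = m2 K a b - m2 K c d) ∨
    (∃ a b d : X, d < b ∧ b < a ∧ g = m2 K a b - m2 K b d)

/-- The maximal element `b = max X`. -/
def topEl (X : Type*) [Fintype X] [LinearOrder X] [Nonempty X] : X :=
  Finset.univ.max' Finset.univ_nonempty

/-- The minimal element `a = min X`. -/
def botEl (X : Type*) [Fintype X] [LinearOrder X] [Nonempty X] : X :=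
  Finset.univ.min' Finset.univ_nonempty

/-- The ideal `I_M`, generated by `M' = M \ {ba}` where `a = min X`, `b = max X`. -/
def qhsIdeal (K : Type*) [Field K] {X : Type*} [Fintype X] [LinearOrder X] [Nonempty X]
    (M : Set (MonoidAlgebra K (FreeMonoid X))) :
    Submodule K (MonoidAlgebra K (FreeMonoid X)) :=
  idealSpan K (M \ {m2 K (topEl X) (botEl X)})

/-- The right-to-left lexicographical strict order on degree-`m` monomials. -/
def rlLt {X : Type*} [LinearOrder X] {m : ℕ} (u v : Fin m → X) : Prop :=
  ∃ j : Fin m, u j < v j ∧ ∀ l : Fin m, j < l → u l = v l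

/-- The monomial `u` is minimal with respect to the QHS `M`. -/
def MinimalMon (K : Type*) [Field K] {X : Type*} [Fintype X] [LinearOrder X] [Nonempty X]
    (M : Set (MonoidAlgebra K (FreeMonoid X))) {m : ℕ} (u : Fin m → X) : Prop :=
  mOf K u ∉ qhsIdeal K M ∧
    ∀ v : Fin m → X, mOf K u - mOf K v ∈ qhsIdeal K M → u = v ∨ rlLt u v

/-- The monomial `u` is tame with respect to the QHS `M`. -/
def TameMon (K : Type*) [Field K] {X : Type*} [Fintype X] [LinearOrder X] [Nonempty X]
    (M : Set (MonoidAlgebra K (FreeMonoid X))) {m : ℕ} (u : Fin m → X) : Prop :=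
  MinimalMon K M u ∧ ∃ v : Fin m → X, ∃ j : Fin m,
    mOf K u - mOf K v ∈ qhsIdeal K M ∧ v j = topEl X ∧ ∀ l : Fin m, j < l → v l = u l

/-- The monomial `u` is singular with respect to the QHS `M`: minimal and not tame. -/
def SingularMon (K : Type*) [Field K] {X : Type*} [Fintype X] [LinearOrder X] [Nonempty X]
    (M : Set (MonoidAlgebra K (FreeMonoid X))) {m : ℕ} (u : Fin m → X) : Prop :=
  MinimalMon K M u ∧ ¬ TameMon K M u

/-- The QHS `M` is regular: for some positive `m` there are no singular monomials
of degree `m`. -/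
def RegularQHS (K : Type*) [Field K] {X : Type*} [Fintype X] [LinearOrder X] [Nonempty X]
    (M : Set (MonoidAlgebra K (FreeMonoid X))) : Prop :=
  ∃ m : ℕ, 0 < m ∧ ∀ u : Fin m → X, ¬ SingularMon K M u

/-- `e ∈ X` is pure with respect to `M`: whenever `ab - ce ∈ M`,
one has `a ≥ b > c ≥ e`. -/
def PureEl (K : Type*) [Field K] {X : Type*} [LinearOrder X]
    (M : Set (MonoidAlgebra K (FreeMonoid X))) (e : X) : Prop :=
  ∀ a b c : X, m2 K a b - m2 K c e ∈ M → e ≤ c ∧ c < b ∧ b ≤ a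

open Function

section IdealSpan

variable (K : Type*) [Field K] {A : Type*} [Ring A] [Algebra K A] {s t : Set A}

theorem mul_mul_mem_idealSpan (p q : A) {g : A} (hg : g ∈ s) : p * g * q ∈ idealSpan K s :=
  Submodule.subset_span ⟨p, q, g, hg, rfl⟩

variable {K}

theorem idealSpan_mono (h : s ⊆ t) : idealSpan K s ≤ idealSpan K t :=
  Submodule.span_mono fun _ ⟨p, q, a, ha, hx⟩ => ⟨p, q, a, h ha, hx⟩

theorem mul_mem_idealSpan_right {x : A} (hx : x ∈ idealSpan K s) (r : A) :
    x * r ∈ idealSpan K s := by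
  have : idealSpan K s ≤ (idealSpan K s).comap (LinearMap.mulRight K r) :=
    Submodule.span_le.2 fun _ ⟨p, q, a, ha, hx⟩ => by
      simpa [hx, mul_assoc] using mul_mul_mem_idealSpan K p (q * r) ha
  exact this hx

end IdealSpan

section RlLt

variable {X : Type*} [LinearOrder X] {m : ℕ}

theorem rlLt_iff_toColex_lt {u v : Fin m → X} : rlLt u v ↔ toColex u < toColex v :=
  ⟨fun ⟨j, hlt, heq⟩ => ⟨j, heq, hlt⟩, fun ⟨j, heq, hlt⟩ => ⟨j, hlt, heq⟩⟩

theorem rlLt_trans {u v w : Fin m → X} (huv : rlLt u v) (hvw : rlLt v w) : rlLt u w := by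
  rw [rlLt_iff_toColex_lt] at *
  exact huv.trans hvw

theorem wellFounded_rlLt [Finite X] : WellFounded (rlLt (X := X) (m := m)) :=
  (InvImage.wf (toColex : (Fin m → X) → Colex (Fin m → X)) wellFounded_lt).mono
    fun _ _ => rlLt_iff_toColex_lt.1

theorem rlLt_snoc {u v : Fin m → X} (h : rlLt u v) (x : X) :
    rlLt (Fin.snoc u x : Fin (m + 1) → X) (Fin.snoc v x) := by
  obtain ⟨j, hlt, heq⟩ := h
  refine ⟨j.castSucc, by simpa, Fin.lastCases (by simp) fun l hl => ?_⟩
  simpa using heq l (by simpa using hl)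

end RlLt

section Words

variable (K : Type*) [Field K] {X : Type*}

theorem mOfW_mul (w₁ w₂ : FreeMonoid X) : mOfW K (w₁ * w₂) = mOfW K w₁ * mOfW K w₂ := by
  simp [mOfW, MonoidAlgebra.single_mul_single]

theorem mOf_snoc {m : ℕ} (u : Fin m → X) (x : X) :
    mOf K (Fin.snoc u x : Fin (m + 1) → X) = mOf K u * mOfW K (FreeMonoid.of x) := by
  rw [mOf, List.ofFn_succ', Fin.snoc_last, List.concat_eq_append, FreeMonoid.ofList_append,
    mOfW_mul, FreeMonoid.ofList_singleton]
  simp only [Fin.snoc_castSucc]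
  rfl

theorem ofFn_update_update {n : ℕ} (v : Fin (n + 1) → X) (j : Fin n) (γ δ : X) :
    List.ofFn (update (update v j.castSucc γ) j.succ δ) =
      (List.ofFn v).take j ++ γ :: δ :: (List.ofFn v).drop (j + 2) := by
  apply List.ext_getElem (by simp; omega)
  intro i h₁ h₂
  have hlen : ((List.ofFn v).take j).length = j := by simp; omega
  simp only [List.getElem_ofFn, update_apply, Fin.ext_iff, Fin.val_castSucc, Fin.val_succ]
  split_ifs with h h'
  · subst h
    rw [List.getElem_append_right (by omega)]
    simp only [hlen, Nat.add_sub_cancel_left, List.getElem_cons_succ, List.getElem_cons_zero]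
  · subst h'
    rw [List.getElem_append_right (by omega)]
    simp only [hlen, Nat.sub_self, List.getElem_cons_zero]
  · rcases lt_or_gt_of_ne h' with hi | hi
    · rw [List.getElem_append_left (by omega), List.getElem_take, List.getElem_ofFn]
    · obtain ⟨k, rfl⟩ : ∃ k, i = j + 2 + k := ⟨i - (j + 2), by omega⟩
      rw [List.getElem_append_right (by omega)]
      simp only [hlen, show (j : ℕ) + 2 + k - j = k + 2 by omega, List.getElem_cons_succ,
        List.getElem_drop, List.getElem_ofFn]

theorem mOf_update_update {n : ℕ} (v : Fin (n + 1) → X) (j : Fin n) (γ δ : X) :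
    mOf K (update (update v j.castSucc γ) j.succ δ) =
      mOfW K (.ofList ((List.ofFn v).take j)) * m2 K γ δ *
        mOfW K (.ofList ((List.ofFn v).drop (j + 2))) := by
  rw [mOf, ofFn_update_update, FreeMonoid.ofList_append, FreeMonoid.ofList_cons,
    FreeMonoid.ofList_cons, m2, ← mOfW_mul, ← mOfW_mul, mul_assoc, mul_assoc]

theorem mOf_eq_mul_m2_mul {n : ℕ} (v : Fin (n + 1) → X) (j : Fin n) :
    mOf K v = mOfW K (.ofList ((List.ofFn v).take j)) * m2 K (v j.castSucc) (v j.succ) *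
      mOfW K (.ofList ((List.ofFn v).drop (j + 2))) := by
  conv_lhs => rw [← update_eq_self j.castSucc v, ← update_eq_self j.succ (update _ _ _)]
  rw [mOf_update_update, update_of_ne (Fin.castSucc_lt_succ (i := j)).ne']

variable {K}

theorem mOf_mem_idealSpan_of_m2_mem {s : Set (MonoidAlgebra K (FreeMonoid X))} {n : ℕ}
    (v : Fin (n + 1) → X) (j : Fin n) (h : m2 K (v j.castSucc) (v j.succ) ∈ s) :
    mOf K v ∈ idealSpan K s := by
  rw [mOf_eq_mul_m2_mul]
  exact mul_mul_mem_idealSpan K _ _ h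

theorem mOf_sub_mOf_update_update_mem_idealSpan {s : Set (MonoidAlgebra K (FreeMonoid X))}
    {n : ℕ} (v : Fin (n + 1) → X) (j : Fin n) {γ δ : X}
    (h : m2 K (v j.castSucc) (v j.succ) - m2 K γ δ ∈ s) :
    mOf K v - mOf K (update (update v j.castSucc γ) j.succ δ) ∈ idealSpan K s := by
  rw [mOf_eq_mul_m2_mul, mOf_update_update, ← sub_mul, ← mul_sub]
  exact mul_mul_mem_idealSpan K _ _ h

end Words

section Support

variable {K : Type*} [Field K] {X : Type*}

theorem suppOf_mOfW (w : FreeMonoid X) : suppOf (mOfW K w) = {w} := by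
  simp [suppOf, mOfW]

theorem eq_or_eq_of_mem_suppOf_mOfW_sub {w₁ w₂ w : FreeMonoid X}
    (h : w ∈ suppOf (mOfW K w₁ - mOfW K w₂)) : w = w₁ ∨ w = w₂ := by
  classical
  rw [suppOf, MonoidAlgebra.coeff_sub] at h
  simpa [mOfW, Finsupp.single_apply, eq_comm] using Finsupp.support_sub h

theorem FreeMonoid.of_mul_of_inj {a b c d : X} :
    FreeMonoid.of a * .of b = .of c * .of d ↔ a = c ∧ b = d := by
  refine ⟨fun h => by simpa using congrArg FreeMonoid.toList h, ?_⟩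
  rintro ⟨rfl, rfl⟩
  rfl

end Support

section IsQHS

variable {K : Type*} [Field K] {X : Type*} [LinearOrder X]
  {M : Set (MonoidAlgebra K (FreeMonoid X))}

theorem IsQHS.exists_mem_suppOf (hM : IsQHS K M) {a c : X} (h : c ≤ a) :
    ∃ g ∈ M, .of a * .of c ∈ suppOf g := by
  have : FreeMonoid.of a * .of c ∈ ⋃ g ∈ M, (suppOf g : Set (FreeMonoid X)) :=
    hM.2.1 ▸ ⟨a, c, h, rfl⟩
  simpa using this

variable [Fintype X] [Nonempty X]

theorem le_topEl (x : X) : x ≤ topEl X :=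
  Finset.le_max' _ _ (Finset.mem_univ x)

theorem IsQHS.m2_topEl_mem (hM : IsQHS K M) (c : X) :
    m2 K (topEl X) c ∈ M ∨ ∃ γ δ : X, δ < c ∧ m2 K (topEl X) c - m2 K γ δ ∈ M := by
  obtain ⟨g, hg, hsupp⟩ := hM.exists_mem_suppOf (le_topEl c)
  rcases hM.2.2 g hg with ⟨α, β, -, rfl⟩ | ⟨α, β, γ, δ, hδγ, hγβ, hβα, rfl⟩ |
    ⟨α, β, δ, hδβ, hβα, rfl⟩
  · rw [m2, suppOf_mOfW, Finset.mem_singleton, FreeMonoid.of_mul_of_inj] at hsupp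
    obtain ⟨rfl, rfl⟩ := hsupp
    exact .inl hg
  · rcases eq_or_eq_of_mem_suppOf_mOfW_sub hsupp with h | h <;>
      obtain ⟨rfl, rfl⟩ := FreeMonoid.of_mul_of_inj.1 h
    · exact .inr ⟨γ, δ, hδγ.trans_lt hγβ, hg⟩
    · exact absurd (hγβ.trans_le (hβα.trans (le_topEl α))) (lt_irrefl _)
  · rcases eq_or_eq_of_mem_suppOf_mOfW_sub hsupp with h | h <;>
      obtain ⟨rfl, rfl⟩ := FreeMonoid.of_mul_of_inj.1 h
    · exact .inr ⟨_, δ, hδβ, hg⟩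
    · exact absurd (hβα.trans_le (le_topEl α)) (lt_irrefl _)

end IsQHS

section Reduction

variable {K : Type*} [Field K] {X : Type*} [Fintype X] [LinearOrder X] [Nonempty X]
  {M : Set (MonoidAlgebra K (FreeMonoid X))}

theorem qhsIdeal_le_idealSpan : qhsIdeal K M ≤ idealSpan K M :=
  idealSpan_mono Set.sdiff_subset

theorem exists_tameMon_of_forall_not_singularMon {m : ℕ}
    (hsing : ∀ u : Fin m → X, ¬ SingularMon K M u) (w : Fin m → X)
    (hw : mOf K w ∉ qhsIdeal K M) :
    ∃ u, (u = w ∨ rlLt u w) ∧ mOf K w - mOf K u ∈ qhsIdeal K M ∧ TameMon K M u := by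
  set I := qhsIdeal K M
  obtain ⟨u, hu, hmin⟩ := Set.exists_min_image {v | mOf K w - mOf K v ∈ I} toColex
    (Set.toFinite _) ⟨w, by simp⟩
  have hle (v : Fin m → X) (hv : mOf K w - mOf K v ∈ I) : u = v ∨ rlLt u v :=
    (hmin v hv).eq_or_lt.imp toColex_inj.1 rlLt_iff_toColex_lt.2
  have hminimal : MinimalMon K M u :=
    ⟨fun h => hw (by simpa using I.add_mem hu h),
      fun v hv => hle v (by simpa using I.add_mem hu hv)⟩
  exact ⟨u, hle w (by simp), hu, not_not.1 fun h => hsing u ⟨hminimal, h⟩⟩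

theorem mOf_mem_idealSpan_of_topEl (hM : IsQHS K M) {n : ℕ} {v V : Fin (n + 1) → X} (j : Fin n)
    (htop : v j.castSucc = topEl X) (hagree : ∀ l, j.castSucc < l → v l = V l)
    (hbelow : ∀ u, rlLt u V → mOf K u ∈ idealSpan K M) :
    mOf K v ∈ idealSpan K M := by
  rcases hM.m2_topEl_mem (v j.succ) with hmon | ⟨γ, δ, hδ, hbin⟩
  · exact mOf_mem_idealSpan_of_m2_mem v j (htop ▸ hmon)
  · have hrel := mOf_sub_mOf_update_update_mem_idealSpan v j (htop ▸ hbin)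
    have hlt : rlLt (update (update v j.castSucc γ) j.succ δ) V := by
      refine ⟨j.succ, ?_, fun l hl => ?_⟩
      · simpa [← hagree j.succ Fin.castSucc_lt_succ] using hδ
      · rw [update_of_ne hl.ne', update_of_ne (Fin.castSucc_lt_succ.trans hl).ne']
        exact hagree l (Fin.castSucc_lt_succ.trans hl)
    simpa using add_mem hrel (hbelow _ hlt)

theorem mOf_mem_idealSpan_of_forall_not_singularMon (hM : IsQHS K M) {m : ℕ}
    (hsing : ∀ u : Fin m → X, ¬ SingularMon K M u) (u : Fin (m + 1) → X) :
    mOf K u ∈ idealSpan K M := by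
  refine wellFounded_rlLt.induction (C := fun u => mOf K u ∈ idealSpan K M) u fun u IH => ?_
  obtain ⟨w, c, rfl⟩ : ∃ w c, u = Fin.snoc w c :=
    ⟨Fin.init u, u (Fin.last m), (Fin.snoc_init_self u).symm⟩
  by_cases hw : mOf K w ∈ qhsIdeal K M
  · rw [mOf_snoc]
    exact mul_mem_idealSpan_right (qhsIdeal_le_idealSpan hw) _
  obtain ⟨u, hu, hwu, -, v, j, huv, htop, hagree⟩ :=
    exists_tameMon_of_forall_not_singularMon hsing w hw
  have hrel : mOf K (Fin.snoc w c) - mOf K (Fin.snoc v c) ∈ idealSpan K M := by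
    rw [mOf_snoc, mOf_snoc, ← sub_mul]
    exact mul_mem_idealSpan_right (qhsIdeal_le_idealSpan (by simpa using add_mem hwu huv)) _
  have hv : mOf K (Fin.snoc v c : Fin (m + 1) → X) ∈ idealSpan K M := by
    refine mOf_mem_idealSpan_of_topEl hM (V := Fin.snoc u c) j (by simpa using htop)
      (Fin.lastCases (by simp) fun l hl => by simpa using hagree l (by simpa using hl))
      fun u' hu' => IH u' ?_
    rcases hu with rfl | hu
    exacts [hu', rlLt_trans hu' (rlLt_snoc hu c)]
  simpa using add_mem hrel hv

theorem mOfW_mem_idealSpan_of_lt_length (hM : IsQHS K M) {m : ℕ}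
    (hsing : ∀ u : Fin m → X, ¬ SingularMon K M u) (w : FreeMonoid X) (hw : m < w.length) :
    mOfW K w ∈ idealSpan K M := by
  have hlen : m + 1 ≤ w.toList.length := hw
  have htake : List.ofFn (fun i : Fin (m + 1) => w.toList[i]) = w.toList.take (m + 1) :=
    List.ext_getElem (by simpa using hlen) fun i _ _ => by
      rw [List.getElem_ofFn, List.getElem_take]
      rfl
  rw [← FreeMonoid.ofList_toList w, ← List.take_append_drop (m + 1) w.toList,
    FreeMonoid.ofList_append, mOfW_mul, ← htake]
  exact mul_mem_idealSpan_right (mOf_mem_idealSpan_of_forall_not_singularMon hM hsing _) _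

end Reduction

theorem module_finite_quotient_of_forall_lt_length (K : Type*) [Field K]
    {X : Type*} [Finite X] (J : Submodule K (MonoidAlgebra K (FreeMonoid X))) (N : ℕ)
    (hJ : ∀ w : FreeMonoid X, N < w.length → mOfW K w ∈ J) :
    Module.Finite K (MonoidAlgebra K (FreeMonoid X) ⧸ J) := by
  rw [Module.finite_def, Submodule.fg_def]
  refine ⟨J.mkQ '' (mOfW K '' (FreeMonoid.ofList '' {l : List X | l.length ≤ N})),
    ((List.finite_length_le X N).image _ |>.image _).image _, eq_top_iff.2 ?_⟩
  rintro x -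
  obtain ⟨f, rfl⟩ := J.mkQ_surjective x
  induction f using MonoidAlgebra.induction_on with
  | of w =>
    change J.mkQ (mOfW K w) ∈ _
    by_cases hw : w.length ≤ N
    · exact Submodule.subset_span ⟨_, ⟨w, ⟨w.toList, hw, w.ofList_toList⟩, rfl⟩, rfl⟩
    · rw [J.mkQ_apply, (Submodule.Quotient.mk_eq_zero J).2 (hJ w (not_le.1 hw))]
      exact zero_mem _
  | add f g hf hg => simpa using add_mem hf hg
  | smul r f hf => simpa using Submodule.smul_mem _ r hf

/-- **Lemma (regqhs).** If `M` is a regular QHS on `X`, then the quadratic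
semigroup algebra `R_M = K⟨X⟩ / J_M` is finite dimensional. -/
theorem regular_qhs_finite_dimensional
    (K : Type*) [Field K] (X : Type*) [Fintype X] [LinearOrder X] [Nonempty X]
    (M : Set (MonoidAlgebra K (FreeMonoid X))) (hM : IsQHS K M)
    (hreg : RegularQHS K M) :
    Module.Finite K (MonoidAlgebra K (FreeMonoid X) ⧸ idealSpan K M) := by
  obtain ⟨m, -, hsing⟩ := hreg
  exact module_finite_quotient_of_forall_lt_length K _ m
    (mOfW_mem_idealSpan_of_lt_length hM hsing)
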